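/- If B is an n-dimensional ball (a finite regular CW-complex with subcomplex ∂B such that (B, ∂B) ≅ (Eⁿ, Sⁿ⁻¹)), then the relative cylinder J(B) = I_{∂B} B = (I × B)/(I × ∂B → ∂B) is a ball of dimension n + 1. -/

import Mathlib

/-!
STATEMENT 11: If `B` is an `n`-dimensional ball (a space with boundary `∂B` such
that `(B, ∂B) ≅ (Eⁿ, Sⁿ⁻¹)`), then the relative cylinder
`J(B) = I_{∂B} B = (I × B)/(I × {a} ∼ a for a ∈ ∂B)` is a ball of dimension `n+1`,
with boundary `B⁻ ∪ B⁺` (the two end copies of `B`).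
-/

open Metric

/-- The relation collapsing each interval `I × {a}` for `a` in the boundary. -/
def cylRel {B : Type} (bd : Set B) (p q : unitInterval × B) : Prop :=
  p = q ∨ (p.2 = q.2 ∧ p.2 ∈ bd)

/-- The relative cylinder `J(B) = I_{∂B} B` as a quotient space. -/
def JB {B : Type} [TopologicalSpace B] (bd : Set B) : Type := Quot (cylRel bd)

instance {B : Type} [TopologicalSpace B] (bd : Set B) : TopologicalSpace (JB bd) :=
  instTopologicalSpaceQuot

/-- The boundary of `J(B)`: the two end copies `B⁻ ∪ B⁺` of `B`. -/
def JBboundary {B : Type} [TopologicalSpace B] (bd : Set B) : Set (JB bd) :=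
  {q | ∃ x : B, q = Quot.mk (cylRel bd) ((0 : unitInterval), x) ∨
                q = Quot.mk (cylRel bd) ((1 : unitInterval), x)}


/-! The map `(t, v) ↦ (v, (2t - 1) √(1 - ‖v‖²))` sweeps the vertical chord of `Eⁿ⁺¹` over
each `v ∈ Eⁿ` as `t` runs through `I`; the chord degenerates to a point exactly when `v ∈ Sⁿ⁻¹`.
So it identifies two points of `I × Eⁿ` exactly as the relative cylinder does, and descends to a
continuous bijection from the compact space `J(B)` onto the Hausdorff ball `Eⁿ⁺¹`, hence a
homeomorphism. The two ends `t = 0, 1` sweep the lower and upper hemispheres. -/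

namespace EuclideanSpace

variable {n : ℕ}

noncomputable def snoc (v : EuclideanSpace ℝ (Fin n)) (a : ℝ) : EuclideanSpace ℝ (Fin (n + 1)) :=
  WithLp.toLp 2 (Fin.snoc v.ofLp a)

lemma snoc_inj {v w : EuclideanSpace ℝ (Fin n)} {a b : ℝ} :
    snoc v a = snoc w b ↔ v = w ∧ a = b := by
  rw [snoc, snoc, (WithLp.toLp_injective 2).eq_iff, Fin.snoc_inj, (WithLp.ofLp_injective 2).eq_iff]

lemma exists_snoc_eq (w : EuclideanSpace ℝ (Fin (n + 1))) :
    ∃ v a, snoc v a = w :=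
  ⟨WithLp.toLp 2 (Fin.init w.ofLp), w (Fin.last n), by simp [snoc, Fin.snoc_init_self]⟩

lemma norm_snoc_sq (v : EuclideanSpace ℝ (Fin n)) (a : ℝ) :
    ‖snoc v a‖ ^ 2 = ‖v‖ ^ 2 + a ^ 2 := by
  simp [snoc, EuclideanSpace.real_norm_sq_eq, Fin.sum_univ_castSucc]

lemma continuous_snoc :
    Continuous fun p : EuclideanSpace ℝ (Fin n) × ℝ => snoc p.1 p.2 := by
  refine (PiLp.continuous_toLp 2 _).comp (continuous_pi fun i => ?_)
  induction i using Fin.lastCases with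
  | last => simpa using continuous_snd
  | cast i => simpa [Function.comp_def] using (PiLp.continuous_apply 2 _ i).comp continuous_fst

end EuclideanSpace

section CylinderMap

open EuclideanSpace

variable {n : ℕ}

noncomputable def cylinderMap (t : ℝ) (v : EuclideanSpace ℝ (Fin n)) :
    EuclideanSpace ℝ (Fin (n + 1)) :=
  snoc v ((2 * t - 1) * √(1 - ‖v‖ ^ 2))

lemma one_sub_norm_cylinderMap_sq {v : EuclideanSpace ℝ (Fin n)} (hv : ‖v‖ ≤ 1) (t : ℝ) :
    1 - ‖cylinderMap t v‖ ^ 2 = 4 * t * (1 - t) * (1 - ‖v‖ ^ 2) := by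
  have hv' : 0 ≤ 1 - ‖v‖ ^ 2 := by nlinarith [norm_nonneg v]
  rw [cylinderMap, norm_snoc_sq, mul_pow, Real.sq_sqrt hv']
  ring

lemma norm_cylinderMap_le_one {t : ℝ} (ht : t ∈ Set.Icc 0 1) {v : EuclideanSpace ℝ (Fin n)}
    (hv : ‖v‖ ≤ 1) : ‖cylinderMap t v‖ ≤ 1 := by
  have hv' : 0 ≤ 1 - ‖v‖ ^ 2 := by nlinarith [norm_nonneg v]
  have h : 0 ≤ 1 - ‖cylinderMap t v‖ ^ 2 := by
    rw [one_sub_norm_cylinderMap_sq hv]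
    exact mul_nonneg (mul_nonneg (by linarith [ht.1]) (sub_nonneg.2 ht.2)) hv'
  exact (sq_le_one_iff₀ (norm_nonneg _)).1 (by linarith)

lemma norm_cylinderMap_eq_one_iff {t : ℝ} {v : EuclideanSpace ℝ (Fin n)} (hv : ‖v‖ ≤ 1) :
    ‖cylinderMap t v‖ = 1 ↔ ‖v‖ = 1 ∨ t = 0 ∨ t = 1 := by
  have hsq : ∀ x : ℝ, 0 ≤ x → (x = 1 ↔ 1 - x ^ 2 = 0) := fun x hx => by
    rw [sub_eq_zero, eq_comm (a := 1), pow_eq_one_iff_of_nonneg hx two_ne_zero]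
  rw [hsq _ (norm_nonneg _), hsq _ (norm_nonneg v), one_sub_norm_cylinderMap_sq hv]
  simp only [mul_eq_zero, sub_eq_zero, four_ne_zero, false_or]
  tauto

lemma cylinderMap_eq_cylinderMap_iff {t s : ℝ} {v w : EuclideanSpace ℝ (Fin n)}
    (hv : ‖v‖ ≤ 1) :
    cylinderMap t v = cylinderMap s w ↔ v = w ∧ (‖v‖ = 1 ∨ t = s) := by
  rw [cylinderMap, cylinderMap, snoc_inj]
  constructor
  · rintro ⟨rfl, h⟩
    refine ⟨rfl, or_iff_not_imp_left.2 fun hv1 => ?_⟩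
    have hpos : 0 < √(1 - ‖v‖ ^ 2) := by
      have hlt := lt_of_le_of_ne hv hv1
      exact Real.sqrt_pos.2 (by nlinarith [norm_nonneg v])
    have := mul_right_cancel₀ hpos.ne' h
    linarith
  · rintro ⟨rfl, h | rfl⟩
    · simp [h]
    · exact ⟨rfl, rfl⟩

lemma exists_cylinderMap_eq {w : EuclideanSpace ℝ (Fin (n + 1))} (hw : ‖w‖ ≤ 1) :
    ∃ t ∈ Set.Icc (0 : ℝ) 1, ∃ v : EuclideanSpace ℝ (Fin n), ‖v‖ ≤ 1 ∧ cylinderMap t v = w := by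
  obtain ⟨v, a, rfl⟩ := exists_snoc_eq w
  have hsum := norm_snoc_sq v a
  set r := √(1 - ‖v‖ ^ 2) with hr
  have hr2 : r ^ 2 = 1 - ‖v‖ ^ 2 :=
    Real.sq_sqrt (by nlinarith [sq_nonneg a, norm_nonneg (snoc v a)])
  have har : |a| ≤ r :=
    abs_le_of_sq_le_sq (by nlinarith [norm_nonneg (snoc v a)]) (Real.sqrt_nonneg _)
  -- When `r = 0` also `a = 0`, and the junk value `a / 0 = 0` gives `t = 1 / 2`.
  refine ⟨(a / r + 1) / 2, ?_, v, by nlinarith [norm_nonneg (snoc v a), norm_nonneg v], ?_⟩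
  · have : |a / r| ≤ 1 := by
      rw [abs_div, abs_of_nonneg (Real.sqrt_nonneg _)]
      exact div_le_one_of_le₀ har (Real.sqrt_nonneg _)
    constructor <;> linarith [abs_le.1 this]
  · rw [cylinderMap, ← hr, snoc_inj]
    refine ⟨rfl, ?_⟩
    rw [show (2 * ((a / r + 1) / 2) - 1) = a / r by ring, div_mul_cancel_of_imp]
    exact fun h0 => abs_nonpos_iff.1 (h0 ▸ har)

lemma continuous_cylinderMap :
    Continuous fun p : ℝ × EuclideanSpace ℝ (Fin n) => cylinderMap p.1 p.2 :=
  continuous_snoc.comp (continuous_snd.prodMk (by fun_prop))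

end CylinderMap

namespace JB

variable {B : Type} [TopologicalSpace B] {bd : Set B}

instance [CompactSpace B] : CompactSpace (JB bd) := Quot.compactSpace

variable [CompactSpace B] {Y : Type*} [TopologicalSpace Y] [T2Space Y]

noncomputable def homeomorphOfFibers (g : unitInterval × B → Y) (hg : Continuous g)
    (hfib : ∀ p q, g p = g q ↔ cylRel bd p q) (hsurj : Function.Surjective g) : JB bd ≃ₜ Y :=
  let F : JB bd → Y := Quot.lift g fun p q => (hfib p q).2
  have hinj : Function.Injective F := by
    rintro ⟨p⟩ ⟨q⟩ h
    exact Quot.sound ((hfib p q).1 h)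
  have hsurjF : Function.Surjective F := fun y => (hsurj y).elim fun p hp => ⟨Quot.mk _ p, hp⟩
  Continuous.homeoOfEquivCompactToT2 (f := Equiv.ofBijective F ⟨hinj, hsurjF⟩)
    (continuous_quot_lift _ hg)

lemma image_homeomorphOfFibers_boundary (g : unitInterval × B → Y) (hg : Continuous g)
    (hfib : ∀ p q, g p = g q ↔ cylRel bd p q) (hsurj : Function.Surjective g) :
    homeomorphOfFibers g hg hfib hsurj '' JBboundary bd = g '' ({0, 1} ×ˢ Set.univ) := by
  ext y
  constructor
  · rintro ⟨_, ⟨x, rfl | rfl⟩, rfl⟩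
    · exact ⟨(0, x), by simp, rfl⟩
    · exact ⟨(1, x), by simp, rfl⟩
  · rintro ⟨⟨t, x⟩, ⟨rfl | rfl, -⟩, rfl⟩
    · exact ⟨Quot.mk _ (0, x), ⟨x, Or.inl rfl⟩, rfl⟩
    · exact ⟨Quot.mk _ (1, x), ⟨x, Or.inr rfl⟩, rfl⟩

end JB

section BallCylinder

variable {n : ℕ} {B : Type} [TopologicalSpace B] {bd : Set B}
  (e : B ≃ₜ closedBall (0 : EuclideanSpace ℝ (Fin n)) 1)

lemma mem_iff_norm_eq_one
    (he : (fun x => (e x : EuclideanSpace ℝ (Fin n))) '' bd = sphere 0 1) (x : B) :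
    x ∈ bd ↔ ‖(e x : EuclideanSpace ℝ (Fin n))‖ = 1 := by
  rw [← (Subtype.val_injective.comp e.injective).mem_set_image, Function.comp_def, he,
    mem_sphere_zero_iff_norm]

noncomputable def ballCylinderMap (p : unitInterval × B) :
    closedBall (0 : EuclideanSpace ℝ (Fin (n + 1))) 1 :=
  ⟨cylinderMap p.1 (e p.2),
    mem_closedBall_zero_iff.2 (norm_cylinderMap_le_one p.1.2 (mem_closedBall_zero_iff.1 (e p.2).2))⟩

lemma continuous_ballCylinderMap : Continuous (ballCylinderMap e) :=
  (continuous_cylinderMap.comp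
    (continuous_subtype_val.prodMap (continuous_subtype_val.comp e.continuous))).subtype_mk _

lemma ballCylinderMap_eq_iff
    (he : (fun x => (e x : EuclideanSpace ℝ (Fin n))) '' bd = sphere 0 1) (p q : unitInterval × B) :
    ballCylinderMap e p = ballCylinderMap e q ↔ cylRel bd p q := by
  rw [ballCylinderMap, ballCylinderMap, Subtype.mk.injEq,
    cylinderMap_eq_cylinderMap_iff (mem_closedBall_zero_iff.1 (e p.2).2), Subtype.ext_iff.symm,
    e.injective.eq_iff, ← mem_iff_norm_eq_one e he, cylRel, Prod.ext_iff, Subtype.ext_iff]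
  tauto

lemma surjective_ballCylinderMap : Function.Surjective (ballCylinderMap e) := by
  rintro ⟨w, hw⟩
  obtain ⟨t, ht, v, hv, rfl⟩ := exists_cylinderMap_eq (mem_closedBall_zero_iff.1 hw)
  exact ⟨(⟨t, ht⟩, e.symm ⟨v, mem_closedBall_zero_iff.2 hv⟩), by simp [ballCylinderMap]⟩

lemma image_ballCylinderMap_ends
    (he : (fun x => (e x : EuclideanSpace ℝ (Fin n))) '' bd = sphere 0 1) :
    Subtype.val '' (ballCylinderMap e '' ({0, 1} ×ˢ Set.univ)) = sphere 0 1 := by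
  have hv (x : B) := mem_closedBall_zero_iff.1 (e x).2
  ext w
  constructor
  · rintro ⟨_, ⟨⟨t, x⟩, ⟨rfl | rfl, -⟩, rfl⟩, rfl⟩ <;>
      simp [ballCylinderMap, norm_cylinderMap_eq_one_iff (hv x)]
  · intro hw
    obtain ⟨p, hp⟩ := surjective_ballCylinderMap e ⟨w, sphere_subset_closedBall hw⟩
    have hpw : (ballCylinderMap e p : EuclideanSpace ℝ (Fin (n + 1))) = w := congrArg Subtype.val hp
    rw [← hpw, mem_sphere_zero_iff_norm, ballCylinderMap, norm_cylinderMap_eq_one_iff (hv p.2)]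
      at hw
    rcases hw with hbd | h0 | h1
    · refine ⟨_, ⟨(0, p.2), ⟨by simp, trivial⟩, rfl⟩, ?_⟩
      have hp0 : cylRel bd (0, p.2) p := Or.inr ⟨rfl, (mem_iff_norm_eq_one e he _).2 hbd⟩
      rw [(ballCylinderMap_eq_iff e he _ _).2 hp0, hpw]
    · exact ⟨_, ⟨p, ⟨Or.inl (Subtype.ext h0), trivial⟩, rfl⟩, hpw⟩
    · exact ⟨_, ⟨p, ⟨Or.inr (Subtype.ext h1), trivial⟩, rfl⟩, hpw⟩

end BallCylinder

theorem stmt_11 (n : ℕ) (B : Type) [TopologicalSpace B] (bd : Set B)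
    (hB : ∃ e : B ≃ₜ (closedBall (0 : EuclideanSpace ℝ (Fin n)) 1),
      (fun x => (e x : EuclideanSpace ℝ (Fin n))) '' bd = sphere 0 1) :
    ∃ e : JB bd ≃ₜ (closedBall (0 : EuclideanSpace ℝ (Fin (n + 1))) 1),
      (fun y => (e y : EuclideanSpace ℝ (Fin (n + 1)))) '' JBboundary bd = sphere 0 1 := by
  obtain ⟨e, he⟩ := hB
  have : CompactSpace B := e.symm.compactSpace
  refine ⟨JB.homeomorphOfFibers _ (continuous_ballCylinderMap e) (ballCylinderMap_eq_iff e he)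
    (surjective_ballCylinderMap e), ?_⟩
  rw [← Set.image_image Subtype.val, JB.image_homeomorphOfFibers_boundary,
    image_ballCylinderMap_ends e he]
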